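/- arXiv:2604.13619 — 3 statements merged into one kernel-verified Lean document; each statement's English description precedes it below -/
import Mathlib

section
/- Let A be a ring and B a commutative ring. Let f : A → B be a central ℤ-linear map, and let n ≥ 1. Then for all a_1, …, a_n ∈ A, the n-Frobenius map satisfies the recursion f_n(a_1, a_2, …, a_n) = f(a_n) · f_{n-1}(a_1, a_2, …, a_{n-1}) − Σ_{i=1}^{n-1} f_{n-1}(a_1, a_2, …, a_{i-1}, a_i·a_n, a_{i+1}, a_{i+2}, …, a_{n-1}). -/
/-!
Write the index set as `Option ι`, with `none` as the last index, and split the signed sum over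
permutations `σ` according to whether `σ` fixes `none`. Those that do are `optionCongr τ` and
contribute `f (a none)` times the term of `τ`. The others arise exactly once from some `τ` and
`i` by inserting `none` into the cycle of `τ` through `i`, right after `i`: this flips the sign,
leaves the other cycles alone, and turns the factor of the cycle through `i` into the one for
the family with `a i` replaced by `a i * a none`.

Centrality makes the factor of a cycle independent of where the cycle is read from, so the
choice of starting points in `frob` is immaterial; this is what allows both the computation
above and the transport from `Fin (n + 1)` to `Option (Fin n)`.
-/

open scoped Classical

noncomputable section

/-- A `ℤ`-linear map `f : A → B` is *central* if `f (a * a') = f (a' * a)` for all `a, a'`. -/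
def Central {A B : Type*} [Ring A] [CommRing B] (f : A →ₗ[ℤ] B) : Prop :=
  ∀ a a' : A, f (a * a') = f (a' * a)

/-- The product `a x * a (σ x) * a (σ² x) * ⋯` along the cycle of the permutation `σ`
containing `x`, starting at `x` (the cycle has length `Function.minimalPeriod σ x`). -/
def cycleProdAt {ι A : Type*} [Ring A] (a : ι → A) (σ : Equiv.Perm ι) (x : ι) : A :=
  ((List.range (Function.minimalPeriod (⇑σ) x)).map (fun j => a ((σ ^ j) x))).prod

/-- The Frobenius map of a central `ℤ`-linear map `f : A → B`, applied to a finite family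
`a : ι → A`:  `∑_{σ} sgn σ • ∏_{cycles c of σ} f (a_{i₁} a_{i₂} ⋯ a_{i_k})`, where each cycle
is represented by the product along it starting from its distinguished element (the one
minimizing a fixed enumeration of `ι`); when `f` is central this agrees with the classical
definition, which is independent of the starting points. -/
def frob {ι A B : Type*} [Fintype ι] [DecidableEq ι] [Ring A] [CommRing B]
    (f : A →ₗ[ℤ] B) (a : ι → A) : B :=
  ∑ σ : Equiv.Perm ι, (Equiv.Perm.sign σ : ℤ) •
    ∏ x : ι,
      if ∀ j : ℕ, (Fintype.equivFin ι) x ≤ (Fintype.equivFin ι) ((σ ^ j) x)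
      then f (cycleProdAt a σ x) else 1

/-- `f` is an `n`-homomorphism if it is central and its `(n+1)`-Frobenius map vanishes. -/
def IsNHom {A B : Type*} [Ring A] [CommRing B] (n : ℕ) (f : A →ₗ[ℤ] B) : Prop :=
  Central f ∧ ∀ a : Fin (n + 1) → A, frob f a = 0

/-- `π` is a set partition of the finite set `J`: its blocks are nonempty, pairwise
disjoint, and their union is `J`. -/
def IsSetPartition {α : Type*} [DecidableEq α] (J : Finset α) (π : Finset (Finset α)) : Prop :=
  (∀ P ∈ π, P.Nonempty) ∧
  (∀ P ∈ π, ∀ Q ∈ π, P ≠ Q → Disjoint P Q) ∧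
  π.biUnion id = J

/-- Delete the element `n` from the block of `π` containing it (removing the block if it
becomes empty). -/
def delPart (n : ℕ) (π : Finset (Finset ℕ)) : Finset (Finset ℕ) :=
  (π.image (fun P => P.erase n)).erase ∅

open Equiv Function Finset

section CycleProd
variable {ι κ A B : Type*} [Ring A] [CommRing B]

lemma Equiv.Perm.minimalPeriod_pos [Finite ι] (σ : Perm ι) (x : ι) : 0 < minimalPeriod σ x :=
  minimalPeriod_pos_of_mem_periodicPts (σ.injective.mem_periodicPts x)

lemma Equiv.Perm.pow_apply_ne_self_of_lt_minimalPeriod {σ : Perm ι} {x : ι} {k : ℕ}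
    (hk : 0 < k) (hkx : k < minimalPeriod σ x) : (σ ^ k) x ≠ x :=
  not_isPeriodicPt_of_pos_of_lt_minimalPeriod hk.ne' hkx

lemma Equiv.Perm.minimalPeriod_eq_of_pow_apply {σ : Perm ι} {x : ι} {n : ℕ} (hn : 0 < n)
    (hx : (σ ^ n) x = x) (hmin : ∀ k, 0 < k → k < n → (σ ^ k) x ≠ x) :
    minimalPeriod σ x = n :=
  le_antisymm (IsPeriodicPt.minimalPeriod_le hn hx) <| not_lt.1 fun hlt =>
    hmin _ (minimalPeriod_pos_of_mem_periodicPts (mk_mem_periodicPts hn hx)) hlt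
      (isPeriodicPt_minimalPeriod σ x)

lemma cycleProdAt_congr {a b : ι → A} {σ : Perm ι} {x : ι}
    (h : ∀ j : ℕ, a ((σ ^ j) x) = b ((σ ^ j) x)) : cycleProdAt a σ x = cycleProdAt b σ x := by
  simp only [cycleProdAt, h]

lemma cycleProdAt_of_apply_eq_self (a : ι → A) {σ : Perm ι} {x : ι} (h : σ x = x) :
    cycleProdAt a σ x = a x := by
  simp [cycleProdAt, minimalPeriod_eq_one_iff_isFixedPt.2 h]

lemma cycleProdAt_comp {e : κ → ι} (he : Injective e) (a : ι → A) {σ : Perm ι} {τ : Perm κ}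
    {x : κ} (h : ∀ j : ℕ, (σ ^ j) (e x) = e ((τ ^ j) x)) :
    cycleProdAt a σ (e x) = cycleProdAt (a ∘ e) τ x := by
  have hper : minimalPeriod σ (e x) = minimalPeriod τ x :=
    minimalPeriod_eq_minimalPeriod_iff.2 fun n => by
      simp only [IsPeriodicPt, IsFixedPt, Perm.iterate_eq_pow, h, he.eq_iff]
  simp only [cycleProdAt, hper, h, comp_apply]

variable {f : A →ₗ[ℤ] B}

lemma Central.map_cycleProdAt_apply [Finite ι] (hf : Central f) (a : ι → A) (σ : Perm ι)
    (x : ι) : f (cycleProdAt a σ (σ x)) = f (cycleProdAt a σ x) := by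
  obtain ⟨m, hm⟩ := Nat.exists_eq_add_one_of_ne_zero (σ.minimalPeriod_pos x).ne'
  have hm' : minimalPeriod σ (σ x) = m + 1 := by
    rw [minimalPeriod_apply (σ.injective.mem_periodicPts x), hm]
  have hx : (σ ^ (m + 1)) x = x := hm ▸ iterate_minimalPeriod
  have hsucc (j : ℕ) : (σ ^ j) (σ x) = (σ ^ (j + 1)) x := by rw [pow_succ, Perm.mul_apply]
  rw [cycleProdAt, cycleProdAt, hm, hm', List.prod_range_succ _ m, List.prod_range_succ' _ m]
  simp only [hsucc, hx, pow_zero, Perm.one_apply]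
  exact hf _ _

lemma Central.map_cycleProdAt_of_sameCycle [Finite ι] (hf : Central f) (a : ι → A)
    {σ : Perm ι} {x y : ι} (h : σ.SameCycle x y) :
    f (cycleProdAt a σ x) = f (cycleProdAt a σ y) := by
  obtain ⟨j, -, rfl⟩ := h.exists_pow_eq'
  clear h
  induction j with
  | zero => rfl
  | succ j ih => rw [pow_succ', Perm.mul_apply, hf.map_cycleProdAt_apply, ih]

end CycleProd

section CycleMin
variable {ι L L' : Type*} [LinearOrder L] [LinearOrder L']

def IsCycleMin (u : ι → L) (σ : Perm ι) (x : ι) : Prop :=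
  ∀ j : ℕ, u x ≤ u ((σ ^ j) x)

variable {u : ι → L} {σ : Perm ι}

lemma isCycleMin_iff [Finite ι] {x : ι} :
    IsCycleMin u σ x ↔ ∀ y, σ.SameCycle x y → u x ≤ u y := by
  refine ⟨fun h y hy => ?_, fun h j => h _ (Perm.sameCycle_pow_right.2 (.refl σ x))⟩
  obtain ⟨j, -, rfl⟩ := hy.exists_pow_eq'
  exact h j

lemma IsCycleMin.eq_of_sameCycle [Finite ι] (hu : Injective u) {x y : ι}
    (hx : IsCycleMin u σ x) (hy : IsCycleMin u σ y) (h : σ.SameCycle x y) : x = y :=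
  hu (le_antisymm (isCycleMin_iff.1 hx y h) (isCycleMin_iff.1 hy x h.symm))

variable [Fintype ι]

lemma exists_sameCycle_isCycleMin (u : ι → L) (σ : Perm ι) (x : ι) :
    ∃ y, σ.SameCycle x y ∧ IsCycleMin u σ y := by
  obtain ⟨y, hy, hmin⟩ := (univ.filter (σ.SameCycle x)).exists_min_image u
    ⟨x, mem_filter.2 ⟨mem_univ x, .refl σ x⟩⟩
  have hxy : σ.SameCycle x y := (mem_filter.1 hy).2
  exact ⟨y, hxy, isCycleMin_iff.2 fun z hz => hmin z (mem_filter.2 ⟨mem_univ z, hxy.trans hz⟩)⟩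

lemma prod_ite_isCycleMin_eq {M : Type*} [CommMonoid M] {g : ι → M}
    (hg : ∀ x y, σ.SameCycle x y → g x = g y) {v : ι → L'} (hu : Injective u)
    (hv : Injective v) :
    (∏ x, if IsCycleMin u σ x then g x else 1) = ∏ x, if IsCycleMin v σ x then g x else 1 := by
  choose r hr using exists_sameCycle_isCycleMin v σ
  choose s hs using exists_sameCycle_isCycleMin u σ
  rw [← prod_filter, ← prod_filter]
  refine prod_nbij' r s (fun x _ => by simp [(hr x).2]) (fun y _ => by simp [(hs y).2])
    (fun x hx => ?_) (fun y hy => ?_) (fun x _ => hg x (r x) (hr x).1)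
  · exact ((mem_filter.1 hx).2.eq_of_sameCycle hu (hs (r x)).2 ((hr x).1.trans (hs _).1)).symm
  · exact ((mem_filter.1 hy).2.eq_of_sameCycle hv (hr (s y)).2 ((hs y).1.trans (hr _).1)).symm

end CycleMin

section CycleProduct
variable {ι κ A B L : Type*} [Ring A] [CommRing B] [LinearOrder L] {f : A →ₗ[ℤ] B}

lemma ite_isCycleMin_comp {e : κ → ι} (he : Injective e) (a : ι → A) (u : ι → L)
    {σ : Perm ι} {τ : Perm κ} {x : κ} (h : ∀ j : ℕ, (σ ^ j) (e x) = e ((τ ^ j) x)) :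
    (if IsCycleMin u σ (e x) then f (cycleProdAt a σ (e x)) else 1) =
      if IsCycleMin (u ∘ e) τ x then f (cycleProdAt (a ∘ e) τ x) else 1 := by
  rw [cycleProdAt_comp he a h]
  exact if_congr (by simp only [IsCycleMin, h, comp_apply]) rfl rfl

variable [Fintype ι] [Fintype κ]

def cycleProduct (f : A →ₗ[ℤ] B) (a : ι → A) (u : ι → L) (σ : Perm ι) : B :=
  ∏ x, if IsCycleMin u σ x then f (cycleProdAt a σ x) else 1

lemma cycleProduct_permCongr (e : κ ≃ ι) (a : ι → A) (u : ι → L) (σ : Perm κ) :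
    cycleProduct f a u (e.permCongr σ) = cycleProduct f (a ∘ e) (u ∘ e) σ := by
  have hpow (j : ℕ) (x : κ) : (e.permCongr σ ^ j) (e x) = e ((σ ^ j) x) := by
    have : e.permCongr σ ^ j = e.permCongr (σ ^ j) := (map_pow e.permCongrHom σ j).symm
    simp [this]
  rw [cycleProduct, ← e.prod_comp]
  exact prod_congr rfl fun x _ => ite_isCycleMin_comp e.injective a u (hpow · x)

lemma cycleProduct_optionCongr (a : Option ι → A) (u : Option ι → L) (τ : Perm ι) :
    cycleProduct f a u (optionCongr τ) = f (a none) * cycleProduct f (a ∘ some) (u ∘ some) τ := by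
  have hpow (j : ℕ) (y : ι) : (optionCongr τ ^ j) (some y) = some ((τ ^ j) y) := by
    induction j with
    | zero => rfl
    | succ j ih => rw [pow_succ', Perm.mul_apply, ih, optionCongr_apply, Option.map_some,
        pow_succ' τ, Perm.mul_apply]
  have hfix : optionCongr τ none = none := rfl
  have hmin : IsCycleMin u (optionCongr τ) none := fun j => by
    rw [Perm.pow_apply_eq_self_of_apply_eq_self hfix]
  rw [cycleProduct, Fintype.prod_option, if_pos hmin, cycleProdAt_of_apply_eq_self a hfix]
  exact congrArg _ <| prod_congr rfl fun y _ =>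
    ite_isCycleMin_comp (Option.some_injective ι) a u (hpow · y)

variable [DecidableEq ι] [DecidableEq κ]

lemma Central.frob_eq_sum_cycleProduct (hf : Central f) {u : ι → L} (hu : Injective u)
    (a : ι → A) : frob f a = ∑ σ : Perm ι, (Perm.sign σ : ℤ) • cycleProduct f a u σ := by
  refine sum_congr rfl fun σ _ => congrArg _ ?_
  exact prod_ite_isCycleMin_eq (fun x y h => hf.map_cycleProdAt_of_sameCycle a h)
    (Fintype.equivFin ι).injective hu

lemma Central.frob_comp_equiv (hf : Central f) (e : κ ≃ ι) (a : ι → A) :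
    frob f (a ∘ e) = frob f a := by
  have hu := (Fintype.equivFin ι).injective
  rw [hf.frob_eq_sum_cycleProduct (hu.comp e.injective), hf.frob_eq_sum_cycleProduct hu,
    ← e.permCongr.sum_comp]
  simp only [Perm.sign_permCongr, cycleProduct_permCongr]

end CycleProduct

section OptionPerm
variable {ι A B L : Type*} [DecidableEq ι] [Ring A] [CommRing B] [LinearOrder L]
  {f : A →ₗ[ℤ] B}

/-- The cycles of `insertNoneAfter i τ` are those of `τ`, with `none` inserted into the cycle
through `i`, right after `i`. -/
def insertNoneAfter (i : ι) (τ : Perm ι) : Perm (Option ι) :=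
  swap none (some (τ i)) * optionCongr τ

variable {i : ι} {τ : Perm ι}

@[simp] lemma insertNoneAfter_none : insertNoneAfter i τ none = some (τ i) := by
  simp [insertNoneAfter]

@[simp] lemma insertNoneAfter_some_self : insertNoneAfter i τ (some i) = none := by
  simp [insertNoneAfter]

lemma insertNoneAfter_some_of_ne {y : ι} (hy : y ≠ i) :
    insertNoneAfter i τ (some y) = some (τ y) := by
  simp [insertNoneAfter, swap_apply_of_ne_of_ne, hy]

lemma sign_insertNoneAfter [Fintype ι] : Perm.sign (insertNoneAfter i τ) = -Perm.sign τ := by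
  simp [insertNoneAfter, Perm.sign_swap']

lemma pow_insertNoneAfter_some_of_forall_ne {y : ι} (hy : ∀ j : ℕ, (τ ^ j) y ≠ i) (j : ℕ) :
    (insertNoneAfter i τ ^ j) (some y) = some ((τ ^ j) y) := by
  induction j with
  | zero => rfl
  | succ j ih =>
    rw [pow_succ', Perm.mul_apply, ih, insertNoneAfter_some_of_ne (hy j), pow_succ' τ,
      Perm.mul_apply]

lemma pow_succ_insertNoneAfter_none {j : ℕ} (hj : j < minimalPeriod τ i) :
    (insertNoneAfter i τ ^ (j + 1)) none = some ((τ ^ (j + 1)) i) := by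
  induction j with
  | zero => simp
  | succ j ih =>
    rw [pow_succ', Perm.mul_apply, ih (by omega),
      insertNoneAfter_some_of_ne (τ.pow_apply_ne_self_of_lt_minimalPeriod (by omega) hj),
      pow_succ' τ (j + 1), Perm.mul_apply]

lemma cycleProdAt_insertNoneAfter_some_self [Finite ι] (a : Option ι → A) :
    cycleProdAt a (insertNoneAfter i τ) (some i) =
      cycleProdAt (update (a ∘ some) i (a (some i) * a none)) τ i := by
  obtain ⟨m, hm⟩ := Nat.exists_eq_add_one_of_ne_zero (τ.minimalPeriod_pos i).ne'
  have hne {j : ℕ} (hj : j < m) : (τ ^ (j + 1)) i ≠ i :=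
    τ.pow_apply_ne_self_of_lt_minimalPeriod j.succ_pos (by omega)
  have hpow {j : ℕ} (hj : j ≤ m) :
      (insertNoneAfter i τ ^ (j + 2)) (some i) = some ((τ ^ (j + 1)) i) := by
    rw [pow_succ _ (j + 1), Perm.mul_apply, insertNoneAfter_some_self,
      pow_succ_insertNoneAfter_none (by omega)]
  have hper : minimalPeriod (insertNoneAfter i τ) (some i) = m + 2 := by
    refine Perm.minimalPeriod_eq_of_pow_apply (by omega) ?_ fun k hk0 hkm => ?_
    · rw [hpow le_rfl, ← hm]
      exact congrArg some iterate_minimalPeriod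
    · obtain rfl | ⟨j, rfl⟩ : k = 1 ∨ ∃ j, k = j + 2 := by
        rcases k with _ | _ | j <;> simp_all
      · simp
      · rw [hpow (by omega), ne_eq, Option.some_inj]
        exact hne (by omega)
  rw [cycleProdAt, cycleProdAt, hper, hm, List.prod_range_succ', List.prod_range_succ',
    List.prod_range_succ' _ m]
  simp only [pow_zero, Perm.one_apply, pow_one, insertNoneAfter_some_self]
  rw [pow_zero, Perm.one_apply, update_self, mul_assoc]
  refine congrArg _ (congrArg _ (congrArg _ (List.map_congr_left fun j hj => ?_)))
  rw [hpow (by simp at hj; omega), update_of_ne (hne (by simpa using hj)), comp_apply]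

lemma pow_insertNoneAfter_some_cases (y : ι) (j : ℕ) :
    (∃ z, (insertNoneAfter i τ ^ j) (some y) = some z ∧ τ.SameCycle y z) ∨
      ((insertNoneAfter i τ ^ j) (some y) = none ∧ τ.SameCycle y i) := by
  induction j with
  | zero => exact .inl ⟨y, rfl, .refl τ y⟩
  | succ j ih =>
    rw [pow_succ', Perm.mul_apply]
    rcases ih with ⟨z, hz, hyz⟩ | ⟨hn, hyi⟩
    · rw [hz]
      by_cases hzi : z = i
      · exact .inr ⟨hzi ▸ insertNoneAfter_some_self, hzi ▸ hyz⟩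
      · exact .inl ⟨τ z, insertNoneAfter_some_of_ne hzi, hyz.apply_right⟩
    · exact .inl ⟨τ i, by rw [hn, insertNoneAfter_none], hyi.apply_right⟩

lemma sameCycle_insertNoneAfter_some_some_iff [Finite ι] {y z : ι} :
    (insertNoneAfter i τ).SameCycle (some y) (some z) ↔ τ.SameCycle y z := by
  constructor
  · intro h
    obtain ⟨j, -, hj⟩ := h.exists_pow_eq'
    rcases pow_insertNoneAfter_some_cases (i := i) (τ := τ) y j with ⟨w, hw, hyw⟩ | ⟨hn, -⟩
    · rwa [Option.some_inj.1 (hj.symm.trans hw)]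
    · exact absurd (hj.symm.trans hn) (Option.some_ne_none z)
  · intro h
    have hstep (w : ι) : (insertNoneAfter i τ).SameCycle (some w) (some (τ w)) := by
      by_cases hw : w = i
      · subst hw
        have h2 : (insertNoneAfter w τ ^ 2) (some w) = some (τ w) := by
          simp [pow_two]
        exact h2 ▸ Perm.sameCycle_pow_right.2 (.refl _ _)
      · exact insertNoneAfter_some_of_ne hw ▸ (Perm.SameCycle.refl _ _).apply_right
    obtain ⟨j, -, rfl⟩ := h.exists_pow_eq'
    clear h
    induction j with
    | zero => exact .refl _ _
    | succ j ih => rw [pow_succ', Perm.mul_apply]; exact ih.trans (hstep _)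

variable {u : Option ι → L}

lemma isCycleMin_insertNoneAfter_some_iff [Finite ι] (hu : ∀ y, u (some y) < u none)
    {y : ι} : IsCycleMin u (insertNoneAfter i τ) (some y) ↔ IsCycleMin (u ∘ some) τ y := by
  simp only [isCycleMin_iff, Option.forall, sameCycle_insertNoneAfter_some_some_iff,
    comp_apply, (hu y).le, implies_true, true_and]

lemma not_isCycleMin_insertNoneAfter_none (hu : ∀ y, u (some y) < u none) :
    ¬ IsCycleMin u (insertNoneAfter i τ) none :=
  fun h => (hu (τ i)).not_ge (by simpa using h 1)

lemma Central.map_cycleProdAt_insertNoneAfter_some [Finite ι] (hf : Central f)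
    (a : Option ι → A) (y : ι) :
    f (cycleProdAt a (insertNoneAfter i τ) (some y)) =
      f (cycleProdAt (update (a ∘ some) i (a (some i) * a none)) τ y) := by
  by_cases h : τ.SameCycle y i
  · rw [hf.map_cycleProdAt_of_sameCycle a (sameCycle_insertNoneAfter_some_some_iff.2 h),
      cycleProdAt_insertNoneAfter_some_self, hf.map_cycleProdAt_of_sameCycle _ h]
  · have hy (j : ℕ) : (τ ^ j) y ≠ i := fun hj => h (hj ▸ Perm.sameCycle_pow_right.2 (.refl τ y))
    rw [cycleProdAt_comp (Option.some_injective ι) a (pow_insertNoneAfter_some_of_forall_ne hy)]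
    exact congrArg f (cycleProdAt_congr fun j => (update_of_ne (hy j) _ _).symm)

variable [Fintype ι]

lemma Central.cycleProduct_insertNoneAfter (hf : Central f) (hu : ∀ y, u (some y) < u none)
    (a : Option ι → A) :
    cycleProduct f a u (insertNoneAfter i τ) =
      cycleProduct f (update (a ∘ some) i (a (some i) * a none)) (u ∘ some) τ := by
  rw [cycleProduct, Fintype.prod_option, if_neg (not_isCycleMin_insertNoneAfter_none hu),
    one_mul]
  exact prod_congr rfl fun y _ => if_congr (isCycleMin_insertNoneAfter_some_iff hu)
    (hf.map_cycleProdAt_insertNoneAfter_some a y) rfl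

lemma sum_perm_option {M : Type*} [AddCommMonoid M] (F : Perm (Option ι) → M) :
    ∑ σ, F σ = ∑ τ, F (optionCongr τ) + ∑ i, ∑ τ, F (insertNoneAfter i τ) := by
  rw [← Perm.decomposeOption.symm.sum_comp, Fintype.sum_prod_type, Fintype.sum_option]
  congr 1
  · simp [← Perm.one_def]
  · rw [sum_comm, sum_comm (γ := ι)]
    exact sum_congr rfl fun τ _ => (Equiv.sum_comp τ _).symm

end OptionPerm

theorem Central.frob_option {ι A B : Type*} [Fintype ι] [DecidableEq ι] [Ring A] [CommRing B]
    {f : A →ₗ[ℤ] B} (hf : Central f) (a : Option ι → A) :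
    frob f a = f (a none) * frob f (a ∘ some)
      - ∑ i, frob f (update (a ∘ some) i (a (some i) * a none)) := by
  let u : Option ι → ℕ := fun x => x.elim (Fintype.card ι) fun y => Fintype.equivFin ι y
  have hlt (y : ι) : u (some y) < u none := (Fintype.equivFin ι y).isLt
  have hu_some : Injective (u ∘ some) := fun y z h => (Fintype.equivFin ι).injective (Fin.ext h)
  have hu : Injective u := by
    rintro (_ | y) (_ | z) h
    · rfl
    · exact absurd h (hlt z).ne'
    · exact absurd h (hlt y).ne
    · exact congrArg some (hu_some h)
  simp only [hf.frob_eq_sum_cycleProduct hu, hf.frob_eq_sum_cycleProduct hu_some, sum_perm_option,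
    optionCongr_sign, cycleProduct_optionCongr, sign_insertNoneAfter,
    hf.cycleProduct_insertNoneAfter hlt, mul_sum, mul_smul_comm, Units.val_neg, neg_smul,
    sum_neg_distrib, sub_eq_add_neg]

/-- Recursion for the Frobenius maps (here with `n + 1` playing the role of `n ≥ 1`). -/
theorem stmt0 {A B : Type*} [Ring A] [CommRing B] (f : A →ₗ[ℤ] B) (hf : Central f)
    (n : ℕ) (a : Fin (n + 1) → A) :
    frob f a =
      f (a (Fin.last n)) * frob f (fun i : Fin n => a i.castSucc)
        - ∑ i : Fin n,
            frob f (Function.update (fun j : Fin n => a j.castSucc) i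
              (a i.castSucc * a (Fin.last n))) := by
  rw [← hf.frob_comp_equiv finSuccEquivLast.symm, hf.frob_option]
  simp only [comp_def, finSuccEquivLast_symm_none, finSuccEquivLast_symm_some]
end
end

section
/- Let A be a ring and B a commutative ring. Let f : A → B be a central ℤ-linear map and n ∈ ℕ. Then the n-Frobenius map f_n : A^n → B is symmetric in its n inputs: for every permutation τ ∈ S_n and all a_1, …, a_n ∈ A, one has f_n(a_{τ(1)}, a_{τ(2)}, …, a_{τ(n)}) = f_n(a_1, a_2, …, a_n). -/
open scoped Classical

noncomputable section

section Aux

open Equiv Function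

variable {ι : Type*} [Fintype ι] [DecidableEq ι]

lemma perm_mem_periodicPts (σ : Equiv.Perm ι) (x : ι) : x ∈ Function.periodicPts ⇑σ := by
  refine Function.mk_mem_periodicPts (orderOf_pos σ) ?_
  show (⇑σ)^[orderOf σ] x = x
  rw [← Equiv.Perm.coe_pow, pow_orderOf_eq_one]; rfl

lemma perm_pow_minimalPeriod (σ : Equiv.Perm ι) (x : ι) :
    (σ ^ Function.minimalPeriod (⇑σ) x) x = x := by
  have := Function.isPeriodicPt_minimalPeriod (⇑σ) x
  rwa [Function.IsPeriodicPt, Function.IsFixedPt, ← Equiv.Perm.coe_pow] at this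

/-- Rotation invariance of `f ∘ cycleProdAt` for central `f`. -/
lemma f_cycleProdAt_apply {A B : Type*} [Ring A] [CommRing B] (f : A →ₗ[ℤ] B)
    (hf : Central f) (a : ι → A) (σ : Equiv.Perm ι) (x : ι) :
    f (cycleProdAt a σ (σ x)) = f (cycleProdAt a σ x) := by
  have hper := perm_mem_periodicPts σ x
  have hm : Function.minimalPeriod (⇑σ) (σ x) = Function.minimalPeriod (⇑σ) x :=
    Function.minimalPeriod_apply hper
  obtain ⟨k, hk⟩ : ∃ k, Function.minimalPeriod (⇑σ) x = k + 1 :=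
    ⟨_, (Nat.succ_pred_eq_of_pos (Function.minimalPeriod_pos_of_mem_periodicPts hper)).symm⟩
  have hx : (σ ^ (k + 1)) x = x := by rw [← hk]; exact perm_pow_minimalPeriod σ x
  set L : ℕ → A := fun j => a ((σ ^ j) x) with hL
  have h1 : cycleProdAt a σ x = a x * ((List.range k).map (fun j => L (j + 1))).prod := by
    rw [cycleProdAt, hk, List.range_succ_eq_map, List.map_cons, List.prod_cons, List.map_map]
    simp [hL, Function.comp_def, Nat.succ_eq_add_one]
  have h2 : cycleProdAt a σ (σ x) =
      ((List.range k).map (fun j => L (j + 1))).prod * a x := by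
    rw [cycleProdAt, hm, hk, List.range_succ, List.map_append, List.prod_append]
    have hterm : ∀ j : ℕ, (σ ^ j) (σ x) = (σ ^ (j + 1)) x := by
      intro j; rw [pow_succ, Equiv.Perm.mul_apply]
    simp only [hterm, hL]
    simp [hx]
  rw [h1, h2, hf]

/-- Conjugation identity for `cycleProdAt`. -/
lemma cycleProdAt_conj {A : Type*} [Ring A] (a : ι → A) (σ τ : Equiv.Perm ι) (x : ι) :
    cycleProdAt a (τ * σ * τ⁻¹) (τ x) = cycleProdAt (fun i => a (τ i)) σ x := by
  have hpow : ∀ j : ℕ, ((τ * σ * τ⁻¹) ^ j) (τ x) = τ ((σ ^ j) x) := by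
    intro j; rw [conj_pow]; simp
  have hm : Function.minimalPeriod (⇑(τ * σ * τ⁻¹)) (τ x) = Function.minimalPeriod (⇑σ) x := by
    rw [Function.minimalPeriod_eq_minimalPeriod_iff]
    intro n
    simp only [Function.IsPeriodicPt, Function.IsFixedPt, ← Equiv.Perm.coe_pow]
    rw [hpow n]
    exact ⟨fun h => τ.injective h, fun h => by rw [h]⟩
  rw [cycleProdAt, cycleProdAt, hm]
  congr 1
  refine List.map_congr_left fun j _ => ?_
  rw [hpow j]

lemma rep_exists {μ : Type*} [LinearOrder μ] (σ : Equiv.Perm ι) (v : ι → μ) (x : ι) :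
    ∃ y : ι, σ.SameCycle x y ∧ (∀ j : ℕ, v y ≤ v ((σ ^ j) y)) := by
  obtain ⟨y, hy, hmin⟩ := Finset.exists_min_image (Finset.univ.filter (σ.SameCycle x)) v
    ⟨x, by simp [Equiv.Perm.SameCycle.refl]⟩
  have hxy : σ.SameCycle x y := (Finset.mem_filter.mp hy).2
  refine ⟨y, hxy, fun j => ?_⟩
  exact hmin _ (Finset.mem_filter.mpr ⟨Finset.mem_univ _, hxy.trans ⟨(j : ℤ), by simp⟩⟩)

lemma rep_unique {μ : Type*} [LinearOrder μ] (σ : Equiv.Perm ι) (v : ι → μ)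
    (hv : Function.Injective v) (y y' : ι) (hc : σ.SameCycle y y')
    (h1 : ∀ j : ℕ, v y ≤ v ((σ ^ j) y)) (h2 : ∀ j : ℕ, v y' ≤ v ((σ ^ j) y')) : y = y' := by
  obtain ⟨i, _, hi⟩ := hc.exists_pow_eq'
  obtain ⟨i', _, hi'⟩ := hc.symm.exists_pow_eq'
  have a1 : v y ≤ v y' := by have := h1 i; rwa [hi] at this
  have a2 : v y' ≤ v y := by have := h2 i'; rwa [hi'] at this
  exact hv (le_antisymm a1 a2)

/-- Swapping which representatives of cycles are used, for a cycle-constant function. -/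
lemma prod_if_rep {B : Type*} [CommMonoid B] (σ : Equiv.Perm ι) (g : ι → B)
    (hg : ∀ x, g (σ x) = g x) {κ κ' : Type*} [LinearOrder κ] [LinearOrder κ']
    (u : ι → κ) (u' : ι → κ') (hu : Function.Injective u) (hu' : Function.Injective u') :
    (∏ x : ι, if ∀ j : ℕ, u x ≤ u ((σ ^ j) x) then g x else 1)
      = ∏ x : ι, if ∀ j : ℕ, u' x ≤ u' ((σ ^ j) x) then g x else 1 := by
  have hgp : ∀ (x : ι) (j : ℕ), g ((σ ^ j) x) = g x := by
    intro x j
    induction j with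
    | zero => simp
    | succ k ih => rw [pow_succ', Equiv.Perm.mul_apply, hg, ih]
  have hgsc : ∀ x y : ι, σ.SameCycle x y → g x = g y := by
    intro x y h
    obtain ⟨i, _, hi⟩ := h.exists_pow_eq'
    rw [← hi, hgp]
  rw [← Finset.prod_filter, ← Finset.prod_filter]
  set r : ι → ι := fun x => Classical.choose (rep_exists σ u' x) with hrdef
  have hr : ∀ x : ι, σ.SameCycle x (r x) ∧ ∀ j : ℕ, u' (r x) ≤ u' ((σ ^ j) (r x)) :=
    fun x => Classical.choose_spec (rep_exists σ u' x)
  refine Finset.prod_bij (fun x _ => r x) ?_ ?_ ?_ ?_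
  · intro x hx
    simp only [Finset.mem_filter, Finset.mem_univ, true_and]
    exact (hr x).2
  · intro x hx x' hx' h
    have h' : r x = r x' := h
    have hc : σ.SameCycle x x' := ((hr x).1.trans (h' ▸ (hr x').1.symm))
    exact rep_unique σ u hu x x' hc (Finset.mem_filter.mp hx).2 (Finset.mem_filter.mp hx').2
  · intro y hy
    obtain ⟨x, hxc, hxp⟩ := rep_exists σ u y
    refine ⟨x, Finset.mem_filter.mpr ⟨Finset.mem_univ _, hxp⟩, ?_⟩
    exact rep_unique σ u' hu' _ y ((hr x).1.symm.trans hxc.symm) (hr x).2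
      (Finset.mem_filter.mp hy).2
  · intro x hx
    exact hgsc _ _ (hr x).1

end Aux

theorem frobAuxSymm {A B : Type*} [Ring A] [CommRing B] (f : A →ₗ[ℤ] B) (hf : Central f)
    (n : ℕ) (τ : Equiv.Perm (Fin n)) (a : Fin n → A) :
    (∑ σ : Equiv.Perm (Fin n), (Equiv.Perm.sign σ : ℤ) •
      ∏ x : Fin n,
        if ∀ j : ℕ, (Fintype.equivFin (Fin n)) x ≤ (Fintype.equivFin (Fin n)) ((σ ^ j) x)
        then f (cycleProdAt (fun i => a (τ i)) σ x) else 1)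
    = ∑ σ : Equiv.Perm (Fin n), (Equiv.Perm.sign σ : ℤ) •
      ∏ x : Fin n,
        if ∀ j : ℕ, (Fintype.equivFin (Fin n)) x ≤ (Fintype.equivFin (Fin n)) ((σ ^ j) x)
        then f (cycleProdAt a σ x) else 1 := by
  have hbij : Function.Bijective (fun σ : Equiv.Perm (Fin n) => τ * σ * τ⁻¹) :=
    ((Equiv.mulLeft τ).trans (Equiv.mulRight τ⁻¹)).bijective
  refine Fintype.sum_bijective _ hbij _ _ ?_
  intro σ
  have hsign : Equiv.Perm.sign (τ * σ * τ⁻¹) = Equiv.Perm.sign σ := by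
    simp only [map_mul, map_inv]
    rw [mul_comm, ← mul_assoc, inv_mul_cancel, one_mul]
  rw [hsign]
  congr 1
  have key := prod_if_rep σ (fun x => f (cycleProdAt (fun i => a (τ i)) σ x))
      (fun x => f_cycleProdAt_apply f hf _ σ x)
      (⇑(Fintype.equivFin (Fin n))) (fun x => Fintype.equivFin (Fin n) (τ x))
      (Equiv.injective _) ((Equiv.injective _).comp (Equiv.injective τ))
  rw [key]
  refine Fintype.prod_bijective τ τ.bijective _ _ ?_
  intro x
  have hpow : ∀ j : ℕ, ((τ * σ * τ⁻¹) ^ j) (τ x) = τ ((σ ^ j) x) := by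
    intro j; rw [conj_pow]; simp
  refine if_congr ?_ ?_ rfl
  · exact forall_congr' fun j => by rw [hpow j]
  · rw [cycleProdAt_conj]

/-- The Frobenius map `f_n` is symmetric in its `n` inputs. -/
theorem stmt1 {A B : Type*} [Ring A] [CommRing B] (f : A →ₗ[ℤ] B) (hf : Central f)
    (n : ℕ) (τ : Equiv.Perm (Fin n)) (a : Fin n → A) :
    frob f (fun i => a (τ i)) = frob f a := by
  unfold frob
  exact frobAuxSymm f hf n τ a
end
end

section
/- Let A be a ring and B a commutative ring. Let f : A → B be a central ℤ-linear map, let n ≥ 1, let a_1, …, a_n ∈ A, and fix i ∈ {1, 2, …, n−1}. Then Σ_{σ ∈ S_n, σ(i) = n} sgn(σ) · Π_c f(a_{i_1} a_{i_2} ⋯ a_{i_k}) = − f_{n-1}(a_1, a_2, …, a_{i-1}, a_i·a_n, a_{i+1}, a_{i+2}, …, a_{n-1}), where the sum ranges over all permutations σ of [n] with σ(i) = n, and the product runs over all cycles c = (i_1, i_2, …, i_k) of σ. -/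
open scoped Classical

noncomputable section

namespace Stmt9Aux

open Equiv Equiv.Perm Function

variable {ι A B : Type*} [Fintype ι] [Ring A] [CommRing B]

lemma perm_periodic (σ : Perm ι) (x : ι) : x ∈ periodicPts ⇑σ := by
  refine mk_mem_periodicPts (orderOf_pos σ) ?_
  show (⇑σ)^[orderOf σ] x = x
  rw [Equiv.Perm.iterate_eq_pow, pow_orderOf_eq_one]; rfl

lemma minPos (σ : Perm ι) (x : ι) : 0 < minimalPeriod ⇑σ x :=
  minimalPeriod_pos_of_mem_periodicPts (perm_periodic σ x)

omit [Fintype ι] in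
lemma pow_minimalPeriod (σ : Perm ι) (x : ι) : (σ ^ minimalPeriod ⇑σ x) x = x := by
  have := iterate_minimalPeriod (f := ⇑σ) (x := x)
  rwa [Equiv.Perm.iterate_eq_pow] at this

omit [Fintype ι] in
lemma pow_succ_apply (σ : Perm ι) (t : ℕ) (x : ι) : (σ ^ (t + 1)) x = σ ((σ ^ t) x) := by
  rw [pow_succ']; rfl

omit [Fintype ι] in
lemma pow_succ_apply' (σ : Perm ι) (t : ℕ) (x : ι) : (σ ^ (t + 1)) x = (σ ^ t) (σ x) := by
  rw [pow_succ]; rfl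

/-- one-step rotation invariance -/
lemma f_cpa_apply {f : A →ₗ[ℤ] B} (hf : Central f) (a : ι → A) (σ : Perm ι) (x : ι) :
    f (cycleProdAt a σ (σ x)) = f (cycleProdAt a σ x) := by
  have hm : minimalPeriod ⇑σ (σ x) = minimalPeriod ⇑σ x :=
    minimalPeriod_apply (perm_periodic σ x)
  obtain ⟨m', hm'⟩ : ∃ m', minimalPeriod ⇑σ x = m' + 1 :=
    ⟨_, (Nat.succ_pred_eq_of_pos (minPos σ x)).symm⟩
  have h1 : cycleProdAt a σ x
      = a x * ((List.range m').map (fun j => a ((σ ^ (j + 1)) x))).prod := by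
    rw [cycleProdAt, hm', List.range_succ_eq_map, List.map_cons, List.prod_cons, List.map_map]
    simp [Function.comp_def, Nat.succ_eq_add_one]
  have h2 : cycleProdAt a σ (σ x)
      = ((List.range m').map (fun j => a ((σ ^ (j + 1)) x))).prod * a x := by
    rw [cycleProdAt, hm, hm', List.range_succ]
    rw [List.map_append, List.prod_append]
    have hterm : ∀ j : ℕ, (σ ^ j) (σ x) = (σ ^ (j + 1)) x := fun j => (pow_succ_apply' σ j x).symm
    simp only [hterm, List.map_cons, List.map_nil, List.prod_cons, List.prod_nil, mul_one]
    congr 1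
    rw [← hm', pow_minimalPeriod σ x]
  rw [h1, h2, hf]

lemma f_cpa_pow {f : A →ₗ[ℤ] B} (hf : Central f) (a : ι → A) (σ : Perm ι) (x : ι) (t : ℕ) :
    f (cycleProdAt a σ ((σ ^ t) x)) = f (cycleProdAt a σ x) := by
  induction t with
  | zero => rfl
  | succ t ih => rw [pow_succ_apply, f_cpa_apply hf, ih]

lemma f_cpa_sameCycle {f : A →ₗ[ℤ] B} (hf : Central f) (a : ι → A) (σ : Perm ι) {x y : ι}
    (h : σ.SameCycle x y) : f (cycleProdAt a σ x) = f (cycleProdAt a σ y) := by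
  obtain ⟨t, ht, rfl⟩ := h.exists_pow_eq'
  exact (f_cpa_pow hf a σ x t).symm

variable {κ κ' : Type*} [LinearOrder κ] [LinearOrder κ']

/-- minimal representative exists -/
lemma exists_minRep (σ : Perm ι) (e : ι → κ) (x : ι) :
    ∃ y, σ.SameCycle x y ∧ ∀ j : ℕ, e y ≤ e ((σ ^ j) y) := by
  have hne : (Finset.univ.filter (σ.SameCycle x)).Nonempty :=
    ⟨x, by simp [SameCycle.refl]⟩
  obtain ⟨y, hy, hmin⟩ := Finset.exists_min_image _ e hne
  simp only [Finset.mem_filter, Finset.mem_univ, true_and] at hy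
  refine ⟨y, hy, fun j => ?_⟩
  refine hmin _ ?_
  simp only [Finset.mem_filter, Finset.mem_univ, true_and]
  exact hy.trans ⟨(j : ℤ), by simp⟩

lemma minRep_unique (σ : Perm ι) {e : ι → κ} (he : Function.Injective e) {x y : ι}
    (hxy : σ.SameCycle x y) (hx : ∀ j : ℕ, e x ≤ e ((σ ^ j) x))
    (hy : ∀ j : ℕ, e y ≤ e ((σ ^ j) y)) : x = y := by
  obtain ⟨t, ht, rfl⟩ := hxy.exists_pow_eq'
  obtain ⟨s, hs, hsx⟩ := hxy.symm.exists_pow_eq'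
  refine he (le_antisymm (hx t) ?_)
  have := hy s
  rwa [hsx] at this

def minRep (σ : Perm ι) (e : ι → κ) (x : ι) : ι := Classical.choose (exists_minRep σ e x)

lemma minRep_spec (σ : Perm ι) (e : ι → κ) (x : ι) :
    σ.SameCycle x (minRep σ e x) ∧ ∀ j : ℕ, e (minRep σ e x) ≤ e ((σ ^ j) (minRep σ e x)) :=
  Classical.choose_spec (exists_minRep σ e x)

/-- Part I: independence of the enumeration -/
lemma prod_cond_indep {f : A →ₗ[ℤ] B} (hf : Central f) (a : ι → A) (σ : Perm ι)
    (e : ι → κ) (e' : ι → κ') (he : Function.Injective e) (he' : Function.Injective e') :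
    (∏ x : ι, if ∀ j : ℕ, e x ≤ e ((σ ^ j) x) then f (cycleProdAt a σ x) else 1)
    = ∏ x : ι, if ∀ j : ℕ, e' x ≤ e' ((σ ^ j) x) then f (cycleProdAt a σ x) else 1 := by
  rw [← Finset.prod_filter, ← Finset.prod_filter]
  refine Finset.prod_bij (fun x _ => minRep σ e' x) ?_ ?_ ?_ ?_
  · intro x hx
    simp only [Finset.mem_filter, Finset.mem_univ, true_and]
    exact (minRep_spec σ e' x).2
  · intro x hx y hy hxy
    simp only [Finset.mem_filter, Finset.mem_univ, true_and] at hx hy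
    have hxy' : minRep σ e' x = minRep σ e' y := hxy
    have h2 := (minRep_spec σ e' y).1
    rw [← hxy'] at h2
    exact minRep_unique σ he ((minRep_spec σ e' x).1.trans h2.symm) hx hy
  · intro y hy
    simp only [Finset.mem_filter, Finset.mem_univ, true_and] at hy
    refine ⟨minRep σ e y, ?_, ?_⟩
    · simp only [Finset.mem_filter, Finset.mem_univ, true_and]
      exact (minRep_spec σ e y).2
    · exact minRep_unique σ he' (((minRep_spec σ e y).1.trans
        (minRep_spec σ e' (minRep σ e y)).1).symm) ((minRep_spec σ e' _).2) hy
  · intro x hx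
    exact f_cpa_sameCycle hf a σ (minRep_spec σ e' x).1


variable {n : ℕ}

def phi (i : Fin n) (τ : Perm (Fin n)) : Perm (Fin (n + 1)) :=
  (finSuccEquivLast.symm.permCongr τ.optionCongr) * Equiv.swap i.castSucc (Fin.last n)

lemma phi_castSucc (i : Fin n) (τ : Perm (Fin n)) (y : Fin n) :
    phi i τ y.castSucc = if y = i then Fin.last n else (τ y).castSucc := by
  rcases eq_or_ne y i with rfl | h
  · simp [phi, Equiv.permCongr_apply, Perm.mul_apply]
  · have h1 : y.castSucc ≠ i.castSucc := fun hc => h (Fin.castSucc_injective n hc)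
    have h2 : y.castSucc ≠ Fin.last n := (Fin.castSucc_lt_last y).ne
    simp [phi, Equiv.permCongr_apply, Perm.mul_apply, Equiv.swap_apply_of_ne_of_ne h1 h2, h]

lemma phi_last (i : Fin n) (τ : Perm (Fin n)) :
    phi i τ (Fin.last n) = (τ i).castSucc := by
  simp [phi, Equiv.permCongr_apply, Perm.mul_apply]

lemma sign_phi (i : Fin n) (τ : Perm (Fin n)) :
    Perm.sign (phi i τ) = - Perm.sign τ := by
  rw [phi, map_mul, Perm.sign_swap (Fin.castSucc_lt_last i).ne, Perm.sign_permCongr,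
    Equiv.optionCongr_sign, mul_neg_one]

lemma phi_inj (i : Fin n) {τ₁ τ₂ : Perm (Fin n)} (h : phi i τ₁ = phi i τ₂) : τ₁ = τ₂ := by
  ext y
  show (τ₁ y : ℕ) = τ₂ y
  rcases eq_or_ne y i with rfl | hy
  · have := congrArg (fun σ : Perm (Fin (n+1)) => σ (Fin.last n)) h
    simp only [phi_last] at this
    exact congrArg Fin.val (Fin.castSucc_injective n this)
  · have := congrArg (fun σ : Perm (Fin (n+1)) => σ y.castSucc) h
    simp only [phi_castSucc, if_neg hy] at this
    exact congrArg Fin.val (Fin.castSucc_injective n this)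

lemma phi_surj (i : Fin n) (σ : Perm (Fin (n + 1))) (hσ : σ i.castSucc = Fin.last n) :
    ∃ τ, phi i τ = σ := by
  set ρ : Perm (Fin (n + 1)) := σ * Equiv.swap i.castSucc (Fin.last n) with hρ
  have hρlast : ρ (Fin.last n) = Fin.last n := by
    simp [hρ, Perm.mul_apply, Equiv.swap_apply_right, hσ]
  set E : Perm (Option (Fin n)) := finSuccEquivLast.permCongr ρ with hE
  have hEnone : E none = none := by
    simp [hE, Equiv.permCongr_apply, hρlast]
  refine ⟨Equiv.removeNone E, ?_⟩
  have h1 : (Equiv.removeNone E).optionCongr = E := by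
    rw [map_equiv_removeNone, hEnone, Equiv.swap_self]
    exact one_mul E
  rw [phi, h1]
  have h2 : finSuccEquivLast.symm.permCongr E = ρ := by
    ext z
    simp [hE, Equiv.permCongr_apply]
  rw [h2, hρ, mul_assoc, Equiv.swap_mul_self, mul_one]


omit [Fintype ι] in
lemma perm_minimalPeriod_dvd {σ : Perm ι} {x : ι} {t : ℕ} (h : (σ ^ t) x = x) :
    minimalPeriod ⇑σ x ∣ t := by
  refine Function.IsPeriodicPt.minimalPeriod_dvd ?_
  show (⇑σ)^[t] x = x
  rwa [Equiv.Perm.iterate_eq_pow]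

omit [Fintype ι] in
lemma perm_huniq {σ : Perm ι} {x : ι} {s t : ℕ}
    (hs : s < minimalPeriod ⇑σ x) (ht : t < minimalPeriod ⇑σ x)
    (h : (σ ^ s) x = (σ ^ t) x) : s = t := by
  refine iterate_injOn_Iio_minimalPeriod (f := ⇑σ) (x := x) hs ht ?_
  show (⇑σ)^[s] x = (⇑σ)^[t] x
  rwa [Equiv.Perm.iterate_eq_pow, Equiv.Perm.iterate_eq_pow]


variable {i : Fin n} {τ : Perm (Fin n)}

/-- iterates avoiding `i` -/
lemma phi_pow_castSucc (y : Fin n) :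
    ∀ t : ℕ, (∀ k, k < t → (τ ^ k) y ≠ i) →
      ((phi i τ) ^ t) y.castSucc = ((τ ^ t) y).castSucc := by
  intro t
  induction t with
  | zero => intro _; simp
  | succ t ih =>
    intro h
    rw [pow_succ_apply, ih (fun k hk => h k (hk.trans (Nat.lt_succ_self t))),
      phi_castSucc, if_neg (h t (Nat.lt_succ_self t)), pow_succ_apply]

section Main

variable {A : Type*} [Ring A] (a : Fin (n + 1) → A)

/-- Claim 1 -/
lemma phi_pow_mem (x : Fin n) (j : ℕ) :
    (((phi i τ) ^ j) x.castSucc = Fin.last n ∧ ∃ s, (τ ^ s) x = i) ∨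
      ∃ s, ((phi i τ) ^ j) x.castSucc = ((τ ^ s) x).castSucc := by
  induction j with
  | zero => right; exact ⟨0, by simp⟩
  | succ j ih =>
    rcases ih with ⟨hlast, s, hs⟩ | ⟨s, hs⟩
    · right
      refine ⟨s + 1, ?_⟩
      rw [pow_succ_apply, hlast, phi_last, pow_succ_apply, hs]
    · rcases eq_or_ne ((τ ^ s) x) i with he | he
      · left
        constructor
        · rw [pow_succ_apply, hs, phi_castSucc, if_pos he]
        · exact ⟨s, he⟩
      · right
        refine ⟨s + 1, ?_⟩
        rw [pow_succ_apply, hs, phi_castSucc, if_neg he, pow_succ_apply]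

/-- Claim 2 -/
lemma phi_pow_surj (x : Fin n) (s : ℕ) :
    ∃ j, ((phi i τ) ^ j) x.castSucc = ((τ ^ s) x).castSucc := by
  induction s with
  | zero => exact ⟨0, by simp⟩
  | succ s ih =>
    obtain ⟨j, hj⟩ := ih
    rcases eq_or_ne ((τ ^ s) x) i with he | he
    · refine ⟨j + 2, ?_⟩
      have h1 : ((phi i τ) ^ (j + 1)) x.castSucc = Fin.last n := by
        rw [pow_succ_apply, hj, phi_castSucc, if_pos he]
      rw [show j + 2 = (j + 1) + 1 from rfl, pow_succ_apply, h1, phi_last,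
        pow_succ_apply, he]
    · refine ⟨j + 1, ?_⟩
      rw [pow_succ_apply, hj, phi_castSucc, if_neg he, pow_succ_apply]

/-- condition transfer -/
lemma cond_phi (x : Fin n) :
    (∀ j : ℕ, x.castSucc ≤ ((phi i τ) ^ j) x.castSucc) ↔ (∀ s : ℕ, x ≤ (τ ^ s) x) := by
  constructor
  · intro h s
    obtain ⟨j, hj⟩ := phi_pow_surj (i := i) x s
    have := h j
    rw [hj] at this
    exact (Fin.castSucc_le_castSucc_iff).mp this
  · intro h j
    rcases phi_pow_mem (i := i) x j with ⟨hlast, _⟩ | ⟨s, hs⟩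
    · rw [hlast]; exact Fin.le_last _
    · rw [hs]
      exact (Fin.castSucc_le_castSucc_iff).mpr (h s)

lemma not_cond_last :
    ¬ (∀ j : ℕ, Fin.last n ≤ ((phi i τ) ^ j) (Fin.last n)) := by
  intro h
  have := h 1
  rw [pow_one, phi_last] at this
  exact absurd this (not_le.2 (Fin.castSucc_lt_last _))

/-- main cycle product correspondence -/
lemma cpa_phi (x : Fin n) :
    cycleProdAt a (phi i τ) x.castSucc
      = cycleProdAt (Function.update (fun j : Fin n => a j.castSucc) i
          (a i.castSucc * a (Fin.last n))) τ x := by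
  set σ := phi i τ with hσdef
  set a' := Function.update (fun j : Fin n => a j.castSucc) i
      (a i.castSucc * a (Fin.last n)) with ha'
  set m := minimalPeriod ⇑τ x with hm
  have hmp : 0 < m := minPos τ x
  have hτm : (τ ^ m) x = x := pow_minimalPeriod τ x
  by_cases hhit : ∃ k, k < m ∧ (τ ^ k) x = i
  · -- case B
    obtain ⟨k, hkm, hk⟩ := hhit
    have B1 : ∀ t, t ≤ k → (σ ^ t) x.castSucc = ((τ ^ t) x).castSucc := by
      intro t ht
      refine phi_pow_castSucc x t (fun k' hk' hc => ?_)
      have : k' = k := perm_huniq (lt_of_lt_of_le hk' (ht.trans hkm.le)) hkm (by rw [hc, hk])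
      omega
    have B2 : (σ ^ (k + 1)) x.castSucc = Fin.last n := by
      rw [pow_succ_apply, B1 k le_rfl, phi_castSucc, if_pos hk]
    have B3 : ∀ d, k + 1 + d ≤ m → (σ ^ (k + 2 + d)) x.castSucc = ((τ ^ (k + 1 + d)) x).castSucc := by
      intro d
      induction d with
      | zero =>
        intro _
        rw [show k + 2 + 0 = (k + 1) + 1 from by omega, pow_succ_apply, B2, phi_last,
          show k + 1 + 0 = k + 1 from by omega, pow_succ_apply, hk]
      | succ d ih =>
        intro hd
        have hne : (τ ^ (k + 1 + d)) x ≠ i := by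
          intro hc
          have : k + 1 + d = k := perm_huniq (by omega) hkm (by rw [hc, hk])
          omega
        rw [show k + 2 + (d + 1) = (k + 2 + d) + 1 from by omega, pow_succ_apply,
          ih (by omega), phi_castSucc, if_neg hne,
          show k + 1 + (d + 1) = (k + 1 + d) + 1 from by omega, pow_succ_apply]
    have hper : (σ ^ (m + 1)) x.castSucc = x.castSucc := by
      have := B3 (m - 1 - k) (by omega)
      rw [show k + 2 + (m - 1 - k) = m + 1 from by omega,
        show k + 1 + (m - 1 - k) = m from by omega, hτm] at this
      exact this
    have B4 : minimalPeriod ⇑σ x.castSucc = m + 1 := by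
      have hdvd : minimalPeriod ⇑σ x.castSucc ∣ m + 1 := perm_minimalPeriod_dvd hper
      set d := minimalPeriod ⇑σ x.castSucc with hd
      have hdpos : 0 < d := minPos σ x.castSucc
      have hdle : d ≤ m + 1 := Nat.le_of_dvd (by omega) hdvd
      have hdd : (σ ^ d) x.castSucc = x.castSucc := pow_minimalPeriod σ x.castSucc
      by_contra hne
      have hdm : d ≤ m := by omega
      by_cases h1 : d ≤ k
      · rw [B1 d h1] at hdd
        have : (τ ^ d) x = x := Fin.castSucc_injective n hdd
        have := Nat.le_of_dvd hdpos (perm_minimalPeriod_dvd this)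
        omega
      · by_cases h2 : d = k + 1
        · rw [h2, B2] at hdd
          exact absurd hdd.symm (Fin.castSucc_lt_last x).ne
        · have h3 : k + 2 ≤ d := by omega
          have := B3 (d - k - 2) (by omega)
          rw [show k + 2 + (d - k - 2) = d from by omega] at this
          rw [this] at hdd
          have h4 : (τ ^ (k + 1 + (d - k - 2))) x = x := Fin.castSucc_injective n hdd
          have h5 := Nat.le_of_dvd (by omega) (perm_minimalPeriod_dvd h4)
          omega
    -- products
    set r := m - (k + 1) with hr
    have hLne : ∀ j < k, (τ ^ j) x ≠ i := by
      intro j hj hc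
      have : j = k := perm_huniq (by omega) hkm (by rw [hc, hk])
      omega
    have hTne : ∀ j < r, (τ ^ (k + 1 + j)) x ≠ i := by
      intro j hj hc
      have : k + 1 + j = k := perm_huniq (by omega) hkm (by rw [hc, hk])
      omega
    have hL : cycleProdAt a σ x.castSucc
        = ((List.range k).map (fun j => a (((τ ^ j) x).castSucc))).prod *
          ((a i.castSucc * a (Fin.last n)) *
            ((List.range r).map (fun j => a (((τ ^ (k + 1 + j)) x).castSucc))).prod) := by
      rw [cycleProdAt, B4, show m + 1 = k + (2 + r) from by omega, List.range_add,
        List.map_append, List.prod_append, List.map_map]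
      congr 1
      · refine congrArg List.prod (List.map_congr_left (fun j hj => ?_))
        rw [List.mem_range] at hj
        rw [B1 j (by omega)]
      · rw [show 2 + r = (r + 1) + 1 from by omega, List.range_succ_eq_map,
          List.range_succ_eq_map]
        simp only [List.map_cons, List.prod_cons, List.map_map, Function.comp_def]
        rw [show k + 0 = k from rfl, show k + Nat.succ 0 = k + 1 from rfl,
          B1 k le_rfl, hk, B2, ← mul_assoc]
        congr 2
        refine List.map_congr_left (fun j hj => ?_)
        rw [List.mem_range] at hj
        rw [show k + j.succ.succ = k + 2 + j from by omega, B3 j (by omega)]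
    have hRT : cycleProdAt a' τ x
        = ((List.range k).map (fun j => a (((τ ^ j) x).castSucc))).prod *
          ((a i.castSucc * a (Fin.last n)) *
            ((List.range r).map (fun j => a (((τ ^ (k + 1 + j)) x).castSucc))).prod) := by
      rw [cycleProdAt, ← hm, show m = k + (1 + r) from by omega, List.range_add,
        List.map_append, List.prod_append, List.map_map]
      congr 1
      · refine congrArg List.prod (List.map_congr_left (fun j hj => ?_))
        rw [List.mem_range] at hj
        rw [ha', Function.update_of_ne (hLne j hj)]
      · rw [show 1 + r = r + 1 from by omega, List.range_succ_eq_map]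
        simp only [List.map_cons, List.prod_cons, List.map_map, Function.comp_def]
        rw [show k + 0 = k from rfl, hk, ha', Function.update_self]
        congr 1
        refine congrArg List.prod (List.map_congr_left (fun j hj => ?_))
        rw [List.mem_range] at hj
        rw [show k + j.succ = k + 1 + j from by omega,
          Function.update_of_ne (hTne j hj)]
    rw [hL, hRT]
  · -- case A : i not in the orbit of x
    push_neg at hhit
    have A1 : ∀ t : ℕ, (τ ^ t) x ≠ i := by
      intro t hc
      have h1 : (τ ^ (t % m)) x = (τ ^ t) x := by
        have := iterate_mod_minimalPeriod_eq (f := ⇑τ) (x := x) (n := t)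
        rwa [Equiv.Perm.iterate_eq_pow, Equiv.Perm.iterate_eq_pow, ← hm] at this
      exact hhit (t % m) (Nat.mod_lt t hmp) (by rw [h1, hc])
    have A2 : ∀ t, (σ ^ t) x.castSucc = ((τ ^ t) x).castSucc := fun t =>
      phi_pow_castSucc x t (fun k _ => A1 k)
    have A3 : minimalPeriod ⇑σ x.castSucc = m := by
      refine Nat.dvd_antisymm ?_ ?_
      · exact perm_minimalPeriod_dvd (by rw [A2 m, hτm])
      · refine perm_minimalPeriod_dvd ?_
        have := pow_minimalPeriod σ x.castSucc
        rw [A2] at this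
        exact Fin.castSucc_injective n this
    rw [cycleProdAt, cycleProdAt, A3, ← hm]
    refine congrArg List.prod (List.map_congr_left (fun j hj => ?_))
    rw [A2 j, ha', Function.update_of_ne (A1 j)]

end Main
end Stmt9Aux

/-- The part of the defining sum of `f_n` coming from permutations sending `i` to the last
index equals `−f_{n-1}(a₁,…,a_{i-1}, a_i·aₙ, a_{i+1},…,a_{n-1})` (here with `n + 1`
playing the role of `n ≥ 1`, and `i : Fin n` ranging over `{1,…,n−1}`). -/
theorem stmt9 {A B : Type*} [Ring A] [CommRing B] (f : A →ₗ[ℤ] B) (hf : Central f)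
    (n : ℕ) (a : Fin (n + 1) → A) (i : Fin n) :
    (∑ σ ∈ Finset.univ.filter
        (fun σ : Equiv.Perm (Fin (n + 1)) => σ i.castSucc = Fin.last n),
      (Equiv.Perm.sign σ : ℤ) •
        ∏ x : Fin (n + 1),
          if ∀ j : ℕ, (Fintype.equivFin (Fin (n + 1))) x ≤
              (Fintype.equivFin (Fin (n + 1))) ((σ ^ j) x)
          then f (cycleProdAt a σ x) else 1)
      = - frob f (Function.update (fun j : Fin n => a j.castSucc) i
            (a i.castSucc * a (Fin.last n))) := by
  classical
  set a' : Fin n → A := Function.update (fun j : Fin n => a j.castSucc) i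
      (a i.castSucc * a (Fin.last n)) with ha'
  have hstd : ∀ σ : Equiv.Perm (Fin (n + 1)),
      (∏ x : Fin (n + 1),
        if ∀ j : ℕ, (Fintype.equivFin (Fin (n + 1))) x ≤
            (Fintype.equivFin (Fin (n + 1))) ((σ ^ j) x)
        then f (cycleProdAt a σ x) else 1)
      = ∏ x : Fin (n + 1),
          if ∀ j : ℕ, x ≤ (σ ^ j) x then f (cycleProdAt a σ x) else 1 := fun σ =>
    Stmt9Aux.prod_cond_indep hf a σ (⇑(Fintype.equivFin (Fin (n + 1)))) (fun x => x)
      (Equiv.injective _) (fun _ _ h => h)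
  have hstd' : ∀ τ : Equiv.Perm (Fin n),
      (∏ x : Fin n,
        if ∀ j : ℕ, (Fintype.equivFin (Fin n)) x ≤ (Fintype.equivFin (Fin n)) ((τ ^ j) x)
        then f (cycleProdAt a' τ x) else 1)
      = ∏ x : Fin n,
          if ∀ j : ℕ, x ≤ (τ ^ j) x then f (cycleProdAt a' τ x) else 1 := fun τ =>
    Stmt9Aux.prod_cond_indep hf a' τ (⇑(Fintype.equivFin (Fin n))) (fun x => x)
      (Equiv.injective _) (fun _ _ h => h)
  calc (∑ σ ∈ Finset.univ.filter
        (fun σ : Equiv.Perm (Fin (n + 1)) => σ i.castSucc = Fin.last n),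
      (Equiv.Perm.sign σ : ℤ) •
        ∏ x : Fin (n + 1),
          if ∀ j : ℕ, (Fintype.equivFin (Fin (n + 1))) x ≤
              (Fintype.equivFin (Fin (n + 1))) ((σ ^ j) x)
          then f (cycleProdAt a σ x) else 1)
      = ∑ σ ∈ Finset.univ.filter
          (fun σ : Equiv.Perm (Fin (n + 1)) => σ i.castSucc = Fin.last n),
        (Equiv.Perm.sign σ : ℤ) •
          ∏ x : Fin (n + 1),
            if ∀ j : ℕ, x ≤ (σ ^ j) x then f (cycleProdAt a σ x) else 1 := by
        refine Finset.sum_congr rfl (fun σ _ => ?_)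
        rw [hstd σ]
    _ = ∑ τ : Equiv.Perm (Fin n),
        -((Equiv.Perm.sign τ : ℤ) •
          ∏ x : Fin n, if ∀ j : ℕ, x ≤ (τ ^ j) x then f (cycleProdAt a' τ x) else 1) := by
        refine (Finset.sum_bij (fun (τ : Equiv.Perm (Fin n)) _ => Stmt9Aux.phi i τ)
          ?_ ?_ ?_ ?_).symm
        · intro τ _
          simp only [Finset.mem_filter, Finset.mem_univ, true_and]
          rw [Stmt9Aux.phi_castSucc, if_pos rfl]
        · intro τ₁ _ τ₂ _ h
          exact Stmt9Aux.phi_inj i h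
        · intro σ hσ
          simp only [Finset.mem_filter, Finset.mem_univ, true_and] at hσ
          obtain ⟨τ, hτ⟩ := Stmt9Aux.phi_surj i σ hσ
          exact ⟨τ, Finset.mem_univ τ, hτ⟩
        · intro τ _
          have hprod : (∏ x : Fin (n + 1),
              if ∀ j : ℕ, x ≤ ((Stmt9Aux.phi i τ) ^ j) x
              then f (cycleProdAt a (Stmt9Aux.phi i τ) x) else 1)
              = ∏ x : Fin n,
                if ∀ j : ℕ, x ≤ (τ ^ j) x then f (cycleProdAt a' τ x) else 1 := by
            rw [Fin.prod_univ_castSucc]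
            rw [if_neg (Stmt9Aux.not_cond_last (i := i) (τ := τ)), mul_one]
            refine Finset.prod_congr rfl (fun x _ => ?_)
            rw [Stmt9Aux.cpa_phi a x, ha']
            exact if_congr (Stmt9Aux.cond_phi x) rfl rfl
          rw [hprod, Stmt9Aux.sign_phi, Units.val_neg, neg_smul]
    _ = - frob f a' := by
        rw [frob, ← Finset.sum_neg_distrib]
        refine Finset.sum_congr rfl (fun τ _ => ?_)
        rw [hstd' τ]
end
end
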